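/- arXiv:2004.01659 — 2 statements merged into one kernel-verified Lean document; each statement's English description precedes it below -/
import Mathlib

section
/- Define on the group algebra of S_n the element φ⁺_n(m) = Σ_{π∈S_n} (op⁺_π(m)/m^n)·π where op⁺_π(m) = C(n-1+m-des(π), n). Then for all positive integers k and l, φ⁺_n(k)·φ⁺_n(l) = φ⁺_n(kl). -/
/-!
`Nat.choose (n - 1 + m - des π) n` counts the `π`-compatible maps `f : Fin n → Fin m`, i.e. the
weakly increasing maps that increase strictly at the descents of `π`: adding to `f i` the number
of non-descents before `i` turns them into the strictly increasing maps into
`Fin (n - 1 + m - des π)`.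

Identify `Fin (k * l)` with `Fin l ×ₗ Fin k`. A `σ`-compatible map `h` into it splits uniquely as
a major digit `a` and a minor digit `c`: sorting the positions by the key `(c i, σ i)` gives a
permutation `τ⁻¹`, and then `a` is `τ`-compatible and `c ∘ τ⁻¹` is `σ τ⁻¹`-compatible. Hence the
coefficient of `σ` in `φ⁺(k) φ⁺(l)`, a convolution over `σ = (σ τ⁻¹) τ`, counts exactly the
`σ`-compatible maps into `Fin (k * l)`, and `(k l)ⁿ = kⁿ lⁿ` takes care of the normalisation.
-/

/-- The value of the permutation at position `j` (1-indexed), shifted by 1,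
with the convention that out-of-range positions (in particular `j = 0`) give `0`. -/
def pval {n : ℕ} (π : Equiv.Perm (Fin n)) (j : ℕ) : ℕ :=
  if h : 1 ≤ j ∧ j ≤ n then ((π ⟨j - 1, by omega⟩ : Fin n) : ℕ) + 1 else 0

/-- Number of descents of `π`: indices `i ∈ {1,…,n-1}` with `π(i) > π(i+1)`. -/
def des {n : ℕ} (π : Equiv.Perm (Fin n)) : ℕ :=
  ((Finset.Icc 1 (n - 1)).filter (fun i => pval π (i + 1) < pval π i)).card

/-- Number of left peaks of `π`: indices `i ∈ {1,…,n-1}` with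
`π(i-1) < π(i) > π(i+1)`, with the convention `π(0) = 0`. -/
def lpk {n : ℕ} (π : Equiv.Perm (Fin n)) : ℕ :=
  ((Finset.Icc 1 (n - 1)).filter
    (fun i => pval π (i - 1) < pval π i ∧ pval π (i + 1) < pval π i)).card

/-- Number of interior peaks of `π`: indices `i ∈ {2,…,n-1}` with
`π(i-1) < π(i) > π(i+1)`. -/
def pk {n : ℕ} (π : Equiv.Perm (Fin n)) : ℕ :=
  ((Finset.Icc 2 (n - 1)).filter
    (fun i => pval π (i - 1) < pval π i ∧ pval π (i + 1) < pval π i)).card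

/-- The group-algebra element $φ⁺_n(m) = Σ_π (op⁺_π(m)/m^n)·π$. -/
noncomputable def phiPlus (n m : ℕ) : MonoidAlgebra ℚ (Equiv.Perm (Fin n)) :=
  ∑ π : Equiv.Perm (Fin n),
    MonoidAlgebra.single π ((Nat.choose (n - 1 + m - des π) n : ℚ) / (m : ℚ) ^ n)

open Finset Equiv

lemma Fin.partialSum_last {M : Type*} [AddCommMonoid M] {n : ℕ} (f : Fin n → M) :
    Fin.partialSum f (Fin.last n) = ∑ j, f j := by
  rw [Fin.partialSum, Fin.val_last, List.take_of_length_le (by simp), List.sum_ofFn]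

lemma Nat.card_strictMono_fin (k N : ℕ) :
    Nat.card {g : Fin k → Fin N // StrictMono g} = N.choose k := by
  have e : {g : Fin k → Fin N // StrictMono g} ≃ (Fin k ↪o Fin N) :=
    { toFun g := OrderEmbedding.ofStrictMono g.1 g.2
      invFun f := ⟨f, f.strictMono⟩ }
  rw [Nat.card_congr (e.trans Set.powersetCard.ofFinEmbEquiv), Set.powersetCard.card,
    Nat.card_eq_fintype_card, Fintype.card_fin]

lemma Prod.Lex.toLex_lt_toLex_assoc {α β γ : Type*} [PartialOrder α] [PartialOrder β]
    [Preorder γ] {a a' : α} {b b' : β} {c c' : γ} :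
    toLex (toLex (a, b), c) < toLex (toLex (a', b'), c') ↔
      toLex (a, toLex (b, c)) < toLex (a', toLex (b', c')) := by
  simp only [Prod.Lex.toLex_lt_toLex, toLex_inj, Prod.mk.injEq]
  tauto

lemma strictMono_toLex_congr {ι α γ δ : Type*} [Preorder ι] [Preorder α] [Preorder γ]
    [Preorder δ] {a : ι → α} {g : ι → γ} {g' : ι → δ} (hg : ∀ i j, g i < g j ↔ g' i < g' j) :
    StrictMono (fun i => toLex (a i, g i)) ↔ StrictMono (fun i => toLex (a i, g' i)) := by
  simp only [StrictMono, Prod.Lex.toLex_lt_toLex, hg]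

lemma Tuple.eq_sort_of_strictMono {γ : Type*} [LinearOrder γ] {n : ℕ} {f : Fin n → γ}
    {σ : Perm (Fin n)} (hf : StrictMono (f ∘ σ)) : σ = Tuple.sort f :=
  Tuple.eq_sort_iff.2 ⟨hf.monotone, fun _ _ hij heq => absurd heq (hf hij).ne⟩

lemma Tuple.strictMono_comp_sort {γ : Type*} [LinearOrder γ] {n : ℕ} {f : Fin n → γ}
    (hf : Function.Injective f) : StrictMono (f ∘ Tuple.sort f) :=
  (Tuple.monotone_sort f).strictMono_of_injective (hf.comp (Tuple.sort f).injective)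

noncomputable def finLexProdOrderIso (k l : ℕ) : Fin k ×ₗ Fin l ≃o Fin (k * l) :=
  StrictMono.orderIsoOfSurjective (finProdFinEquiv ∘ ofLex) (fun x y hxy => by
      rcases Prod.Lex.lt_iff.1 hxy with hlt | ⟨heq, hlt⟩
      · simp only [Function.comp_apply, Fin.lt_def, finProdFinEquiv_apply_val] at hlt ⊢
        nlinarith [(ofLex x).2.isLt]
      · simp only [Function.comp_apply, Fin.lt_def, finProdFinEquiv_apply_val, heq] at hlt ⊢
        omega)
    (finProdFinEquiv.surjective.comp ofLex.surjective)

lemma MonoidAlgebra.sum_single_mul_sum_single {R G : Type*} [Semiring R] [Group G] [Fintype G]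
    (a b : G → R) :
    (∑ g, single g (a g)) * (∑ g, single g (b g)) = ∑ g, single g (∑ h, a (g * h⁻¹) * b h) := by
  rw [Finset.sum_mul_sum, Finset.sum_comm]
  calc _ = ∑ h, ∑ g, single g (a (g * h⁻¹) * b h) :=
        Finset.sum_congr rfl fun h _ =>
          Fintype.sum_equiv (Equiv.mulRight h) _ _ fun g => by simp [single_mul_single]
    _ = _ := by
      rw [Finset.sum_comm]
      exact Finset.sum_congr rfl fun g _ => (map_sum (singleAddHom g) _ _).symm

section StepMono

variable {n : ℕ}

def IsStepMono {α : Type*} [Preorder α] (E : Finset (Fin n)) (f : Fin (n + 1) → α) : Prop :=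
  ∀ j, f j.castSucc ≤ f j.succ ∧ (j ∈ E → f j.castSucc < f j.succ)

def weakSteps (E : Finset (Fin n)) : Fin (n + 1) → ℕ :=
  Fin.partialSum fun j => if j ∈ E then 0 else 1

variable (E : Finset (Fin n))

lemma weakSteps_zero : weakSteps E 0 = 0 := Fin.partialSum_zero _

lemma weakSteps_succ (j : Fin n) :
    weakSteps E j.succ = weakSteps E j.castSucc + if j ∈ E then 0 else 1 :=
  Fin.partialSum_succ _ j

lemma weakSteps_last : weakSteps E (Fin.last n) = n - #E := by
  simp [weakSteps, Fin.partialSum_last, Finset.sum_ite, Finset.filter_notMem_eq_sdiff,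
    ← Finset.compl_eq_univ_sdiff, Finset.card_compl]

lemma monotone_weakSteps : Monotone (weakSteps E) :=
  Fin.monotone_iff_le_succ.2 fun j => by rw [weakSteps_succ]; omega

lemma monotone_sub_weakSteps {g : Fin (n + 1) → ℕ} (hg : StrictMono g) :
    Monotone fun i => (g i : ℤ) - weakSteps E i :=
  Fin.monotone_iff_le_succ.2 fun j => by
    have := hg j.castSucc_lt_succ
    rw [weakSteps_succ]
    split_ifs <;> omega

lemma weakSteps_le_of_strictMono {N : ℕ} {g : Fin (n + 1) → Fin N} (hg : StrictMono g)
    (i : Fin (n + 1)) : weakSteps E i ≤ g i ∧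
      (g i : ℕ) - weakSteps E i ≤ (g (Fin.last n) : ℕ) - weakSteps E (Fin.last n) := by
  have h0 := monotone_sub_weakSteps E (Fin.val_strictMono.comp hg) (Fin.zero_le i)
  have hlast := monotone_sub_weakSteps E (Fin.val_strictMono.comp hg) (Fin.le_last i)
  simp only [Function.comp_apply, weakSteps_zero] at h0 hlast
  omega

variable {m : ℕ}

def isStepMonoEquivStrictMono :
    {f : Fin (n + 1) → Fin m // IsStepMono E f} ≃
      {g : Fin (n + 1) → Fin (m + weakSteps E (Fin.last n)) // StrictMono g} where
  toFun f := ⟨fun i => ⟨f.1 i + weakSteps E i, by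
      have := monotone_weakSteps E (Fin.le_last i); omega⟩,
    Fin.strictMono_iff_lt_succ.2 fun j => by
      obtain ⟨hle, hlt⟩ := f.2 j
      simp only [Fin.lt_def, Fin.le_def, weakSteps_succ] at hle hlt ⊢
      by_cases hj : j ∈ E
      · simp only [hj, if_true]; have := hlt hj; omega
      · simp only [hj, if_false]; omega⟩
  invFun g := ⟨fun i => ⟨g.1 i - weakSteps E i, by
      have hi := weakSteps_le_of_strictMono E g.2 i
      have hlast := weakSteps_le_of_strictMono E g.2 (Fin.last n)
      have := (g.1 (Fin.last n)).isLt
      omega⟩,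
    fun j => by
      have hw := weakSteps_le_of_strictMono E g.2 j.castSucc
      have hlt := g.2 j.castSucc_lt_succ
      simp only [Fin.lt_def, Fin.le_def, weakSteps_succ] at hlt ⊢
      refine ⟨by split_ifs <;> omega, fun hj => ?_⟩
      simp only [hj, if_true]
      omega⟩
  left_inv f := by ext i; simp
  right_inv g := by
    ext i
    have := weakSteps_le_of_strictMono E g.2 i
    dsimp only
    omega

theorem card_isStepMono :
    Nat.card {f : Fin (n + 1) → Fin m // IsStepMono E f} = (n + m - #E).choose (n + 1) := by
  rw [Nat.card_congr (isStepMonoEquivStrictMono E), Nat.card_strictMono_fin, weakSteps_last]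
  have := E.card_le_univ
  rw [Fintype.card_fin] at this
  congr 1
  omega

end StepMono

section Compatible

variable {n : ℕ}

-- The lexicographic form of "`f` is weakly increasing, and strictly increasing at every descent
-- of `π`", see `isCompatible_iff_isStepMono`.
def IsCompatible {α : Type*} [Preorder α] (π : Perm (Fin n)) (f : Fin n → α) : Prop :=
  StrictMono fun i => toLex (f i, π i)

def descentSet (π : Perm (Fin (n + 1))) : Finset (Fin n) :=
  {j | π j.succ < π j.castSucc}

lemma pval_val_add_one (π : Perm (Fin n)) (i : Fin n) : pval π (i + 1) = π i + 1 := by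
  simp [pval, i.isLt]

lemma pval_succ_lt_pval_iff (π : Perm (Fin (n + 1))) (j : Fin n) :
    pval π (j + 1 + 1) < pval π (j + 1) ↔ j ∈ descentSet π := by
  have h1 := pval_val_add_one π j.succ
  have h2 := pval_val_add_one π j.castSucc
  simp only [Fin.val_succ, Fin.val_castSucc] at h1 h2
  simp only [descentSet, mem_filter, mem_univ, true_and, h1, h2, Fin.lt_def]
  omega

lemma des_eq_card_descentSet (π : Perm (Fin (n + 1))) : des π = #(descentSet π) := by
  symm
  refine Finset.card_bij (fun j _ => j.val + 1) (fun j hj => ?_) (fun a _ b _ h => ?_) ?_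
  · simp [pval_succ_lt_pval_iff, hj]
  · exact Fin.ext (by simpa using h)
  · intro i hi
    simp only [mem_filter, mem_Icc] at hi
    obtain ⟨j, rfl⟩ : ∃ j : Fin n, i = j + 1 := ⟨⟨i - 1, by omega⟩, by simp; omega⟩
    exact ⟨j, (pval_succ_lt_pval_iff π j).1 hi.2, rfl⟩

lemma isCompatible_iff_isStepMono {α : Type*} [PartialOrder α] {π : Perm (Fin (n + 1))}
    {f : Fin (n + 1) → α} : IsCompatible π f ↔ IsStepMono (descentSet π) f := by
  refine Fin.strictMono_iff_lt_succ.trans (forall_congr' fun j => ?_)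
  have hne : π j.castSucc ≠ π j.succ := π.injective.ne j.castSucc_lt_succ.ne
  simp only [Prod.Lex.toLex_lt_toLex', descentSet, mem_filter, mem_univ, true_and]
  constructor
  · rintro ⟨hle, hlt⟩
    exact ⟨hle, fun hd => lt_of_le_of_ne hle fun he => (hlt he).not_gt hd⟩
  · rintro ⟨hle, hlt⟩
    exact ⟨hle, fun he => (hne.lt_or_gt.resolve_right fun hd => (hlt hd).ne he)⟩

theorem card_isCompatible (π : Perm (Fin n)) (m : ℕ) :
    Nat.card {f : Fin n → Fin m // IsCompatible π f} = (n - 1 + m - des π).choose n := by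
  cases n with
  | zero =>
    have : Unique {f : Fin 0 → Fin m // IsCompatible π f} :=
      ⟨⟨⟨finZeroElim, fun i => i.elim0⟩⟩, fun _ => Subtype.ext (funext finZeroElim)⟩
    simp
  | succ n =>
    simp only [isCompatible_iff_isStepMono, card_isStepMono, des_eq_card_descentSet,
      Nat.add_sub_cancel]

lemma isCompatible_orderIso_comp_iff {α β : Type*} [Preorder α] [Preorder β]
    (e : α ≃o β) {π : Perm (Fin n)} {f : Fin n → α} :
    IsCompatible π (e ∘ f) ↔ IsCompatible π f := by
  simp only [IsCompatible, StrictMono, Prod.Lex.toLex_lt_toLex, Function.comp_apply,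
    e.lt_iff_lt, e.injective.eq_iff]

lemma card_isCompatible_congr {α β : Type*} [Preorder α] [Preorder β] (e : α ≃o β)
    (π : Perm (Fin n)) :
    Nat.card {f : Fin n → α // IsCompatible π f} = Nat.card {f : Fin n → β // IsCompatible π f} :=
  Nat.card_congr <| ((Equiv.refl _).arrowCongr e.toEquiv).subtypeEquiv fun _ =>
    (isCompatible_orderIso_comp_iff e).symm

end Compatible

section LexSplit

variable {n : ℕ} {α β : Type*} [LinearOrder β]

theorem isCompatible_toLex_iff [LinearOrder α] {σ τ : Perm (Fin n)} {a : Fin n → α}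
    {c : Fin n → β} (hc : IsCompatible (σ * τ⁻¹) (c ∘ ⇑τ⁻¹)) :
    IsCompatible σ (fun i => toLex (a i, c i)) ↔ IsCompatible τ a := by
  -- `hc` says that `τ` orders the positions exactly as the keys `(c i, σ i)` do.
  have hkey : ∀ i j, toLex (c i, σ i) < toLex (c j, σ j) ↔ τ i < τ j := fun i j => by
    simpa using hc.lt_iff_lt (a := τ i) (b := τ j)
  unfold IsCompatible
  rw [← strictMono_toLex_congr hkey]
  simp only [StrictMono, Prod.Lex.toLex_lt_toLex_assoc]

def lexSplit (σ : Perm (Fin n)) (h : Fin n → α ×ₗ β) :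
    Perm (Fin n) × (Fin n → α) × (Fin n → β) :=
  let θ := Tuple.sort fun i => toLex ((ofLex (h i)).2, σ i)
  (θ⁻¹, fun i => (ofLex (h i)).1, fun j => (ofLex (h (θ j))).2)

def lexMerge (x : Perm (Fin n) × (Fin n → α) × (Fin n → β)) : Fin n → α ×ₗ β :=
  fun i => toLex (x.2.1 i, x.2.2 (x.1 i))

lemma lexMerge_lexSplit (σ : Perm (Fin n)) (h : Fin n → α ×ₗ β) :
    lexMerge (lexSplit σ h) = h := by
  funext i
  simp [lexMerge, lexSplit]

lemma isCompatible_lexSplit [LinearOrder α] {σ : Perm (Fin n)} {h : Fin n → α ×ₗ β}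
    (hh : IsCompatible σ h) :
    IsCompatible (lexSplit σ h).1 (lexSplit σ h).2.1 ∧
      IsCompatible (σ * (lexSplit σ h).1⁻¹) (lexSplit σ h).2.2 := by
  have hsort : IsCompatible (σ * (lexSplit σ h).1⁻¹) (lexSplit σ h).2.2 :=
    Tuple.strictMono_comp_sort (f := fun i => toLex ((ofLex (h i)).2, σ i))
      fun i j hij => σ.injective (congrArg (fun x => (ofLex x).2) hij)
  exact ⟨(isCompatible_toLex_iff (σ := σ) (c := fun i => (ofLex (h i)).2) hsort).1 hh, hsort⟩

lemma isCompatible_lexMerge [LinearOrder α] {σ : Perm (Fin n)}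
    {x : Perm (Fin n) × (Fin n → α) × (Fin n → β)} (ha : IsCompatible x.1 x.2.1)
    (hb : IsCompatible (σ * x.1⁻¹) x.2.2) :
    IsCompatible σ (lexMerge x) :=
  (isCompatible_toLex_iff (by simpa [Function.comp_def] using hb)).2 ha

lemma lexSplit_lexMerge {σ : Perm (Fin n)} {x : Perm (Fin n) × (Fin n → α) × (Fin n → β)}
    (hb : IsCompatible (σ * x.1⁻¹) x.2.2) : lexSplit σ (lexMerge x) = x := by
  obtain ⟨τ, a, b⟩ := x
  have hθ : τ⁻¹ = Tuple.sort fun i => toLex (b (τ i), σ i) :=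
    Tuple.eq_sort_of_strictMono (by simpa [IsCompatible, Function.comp_def] using hb)
  simp [lexSplit, lexMerge, ← hθ]

def compatibleLexEquiv [LinearOrder α] (σ : Perm (Fin n)) :
    {h : Fin n → α ×ₗ β // IsCompatible σ h} ≃
      {x : Perm (Fin n) × (Fin n → α) × (Fin n → β) //
        IsCompatible x.1 x.2.1 ∧ IsCompatible (σ * x.1⁻¹) x.2.2} where
  toFun h := ⟨lexSplit σ h.1, isCompatible_lexSplit h.2⟩
  invFun x := ⟨lexMerge x.1, isCompatible_lexMerge x.2.1 x.2.2⟩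
  left_inv h := Subtype.ext (lexMerge_lexSplit σ h.1)
  right_inv x := Subtype.ext (lexSplit_lexMerge x.2.2)

theorem card_isCompatible_lex [LinearOrder α] [Finite α] [Finite β] (σ : Perm (Fin n)) :
    Nat.card {h : Fin n → α ×ₗ β // IsCompatible σ h} =
      ∑ τ : Perm (Fin n), Nat.card {a : Fin n → α // IsCompatible τ a} *
        Nat.card {b : Fin n → β // IsCompatible (σ * τ⁻¹) b} := by
  rw [Nat.card_congr ((compatibleLexEquiv σ).trans (Equiv.subtypeProdEquivSigmaSubtype
    fun τ (y : (Fin n → α) × (Fin n → β)) => IsCompatible τ y.1 ∧ IsCompatible (σ * τ⁻¹) y.2)),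
    Nat.card_sigma]
  simp only [← Nat.card_prod]
  exact Finset.sum_congr rfl fun τ _ => Nat.card_congr Equiv.subtypeProdEquivProd

end LexSplit

theorem sum_choose_mul_choose_des {n : ℕ} (σ : Perm (Fin n)) (k l : ℕ) :
    ∑ τ : Perm (Fin n), (n - 1 + k - des (σ * τ⁻¹)).choose n * (n - 1 + l - des τ).choose n
      = (n - 1 + k * l - des σ).choose n := by
  rw [mul_comm k l, ← card_isCompatible, ← card_isCompatible_congr (finLexProdOrderIso l k),
    card_isCompatible_lex]
  simp only [card_isCompatible, mul_comm]

theorem stmt9_general (n k l : ℕ) :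
    phiPlus n k * phiPlus n l = phiPlus n (k * l) := by
  rw [phiPlus, phiPlus, MonoidAlgebra.sum_single_mul_sum_single, phiPlus]
  refine Finset.sum_congr rfl fun σ _ => congrArg (MonoidAlgebra.single σ) ?_
  simp_rw [div_mul_div_comm, ← Finset.sum_div]
  rw [← sum_choose_mul_choose_des σ k l]
  push_cast
  ring

theorem stmt9 (n k l : ℕ) (hk : 0 < k) (hl : 0 < l) :
    phiPlus n k * phiPlus n l = phiPlus n (k * l) :=
  stmt9_general n k l
end

section
/- Σ_{π ∈ S_n} op_π(m) = (2m+1)^n, where op_π(m) = 4^{lpk(π)}·Σ_{a≥0} C(n+m-a, n)·C(n-2lpk(π), a-lpk(π)); equivalently, the left-enriched order polynomials of the n! chains sum to the order polynomial of the n-element antichain. -/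
/-- Binomial coefficient for integer arguments, with the convention that it is
zero when `b < 0` or `a < b`. -/
def zchoose (a b : ℤ) : ℤ :=
  if 0 ≤ b ∧ b ≤ a then ((a.toNat).choose b.toNat : ℤ) else 0

/-- The left-enriched order polynomial of a chain on `n` elements with `k` left
peaks, evaluated at `m`:  `4^k · Σ_{a≥0} C(n+m-a, n)·C(n-2k, a-k)`
(reindexed by `a = k + b`; terms with `b > n` vanish). -/
def opL (n k m : ℕ) : ℤ :=
  4 ^ k * ∑ b ∈ Finset.range (n + 1),
    zchoose ((n : ℤ) + m - (k + b)) n * zchoose ((n : ℤ) - 2 * k) b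

/-- The enriched order polynomial of a chain on `n` elements with `k` peaks,
evaluated at `m`: `2·4^k · Σ_{a≥0} C(n-1+m-a, n)·C(n-1-2k, a-k)`
(reindexed by `a = k + b`; terms with `b > n` vanish). -/
def opStar (n k m : ℕ) : ℤ :=
  2 * 4 ^ k * ∑ b ∈ Finset.range (n + 1),
    zchoose ((n : ℤ) - 1 + m - (k + b)) n * zchoose ((n : ℤ) - 1 - 2 * k) b

/-!
Induction on `n`. Every permutation of `{1, …, n + 1}` arises exactly once by inserting the
value `n + 1` into a permutation `π` of `{1, …, n}` at one of `n + 1` slots; if `k = lpk π`, then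
`2 k + 1` slots leave the number of left peaks unchanged and the other `n - 2 k` raise it by one.
So it suffices that `(2k + 1) opL (n + 1) k + (n - 2k) opL (n + 1) (k + 1) = (2m + 1) opL n k`.
This is read off the generating function `∑ₘ opL n k m xᵐ = 4ᵏ xᵏ (1 + x)ⁿ⁻²ᵏ / (1 - x)ⁿ⁺¹`:
multiplying the coefficient of `xᵐ` by `2m + 1` is the operator `2 x d/dx + 1`.
-/

open Finset Polynomial

section CoeffDivOneSubPow

variable {R : Type*} [CommRing R]

/-- The coefficient of `X ^ m` in the power series `Q / (1 - X) ^ (d + 1)`. -/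
def coeffDivOneSubPow (Q : R[X]) (d m : ℕ) : R :=
  ∑ j ∈ range (m + 1), Q.coeff j * (d + (m - j)).choose d

lemma coeffDivOneSubPow_add (Q P : R[X]) (d m : ℕ) :
    coeffDivOneSubPow (Q + P) d m = coeffDivOneSubPow Q d m + coeffDivOneSubPow P d m := by
  simp [coeffDivOneSubPow, add_mul, sum_add_distrib]

lemma coeffDivOneSubPow_C_mul (a : R) (Q : R[X]) (d m : ℕ) :
    coeffDivOneSubPow (C a * Q) d m = a * coeffDivOneSubPow Q d m := by
  simp [coeffDivOneSubPow, mul_assoc, mul_sum]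

lemma coeffDivOneSubPow_X_pow_mul (Q : R[X]) (k d m : ℕ) :
    coeffDivOneSubPow (X ^ k * Q) d m =
      ∑ b ∈ range (m + 1 - k), Q.coeff b * (d + (m - (k + b))).choose d := by
  symm
  refine sum_of_injOn (k + ·) (fun _ _ _ _ h => by simpa using h) (fun b hb => ?_)
    (fun j hj hj' => ?_) (fun b _ => by simp [coeff_X_pow_mul', add_comm k b])
  · simp only [coe_range, Set.mem_Iio] at hb ⊢; omega
  · have : j < k := by
      by_contra! hkj
      rw [mem_range] at hj
      exact hj' ⟨j - k, by simp only [coe_range, Set.mem_Iio]; omega, by dsimp only; omega⟩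
    simp [coeff_X_pow_mul', this.not_ge]

lemma coeffDivOneSubPow_X_mul (Q : R[X]) (d m : ℕ) :
    coeffDivOneSubPow (X * Q) (d + 1) m =
      ∑ j ∈ range (m + 1), Q.coeff j * (d + (m - j)).choose (d + 1) := by
  have h := coeffDivOneSubPow_X_pow_mul Q 1 (d + 1) m
  rw [pow_one] at h
  rw [h, Nat.add_sub_cancel, sum_range_succ, Nat.sub_self, add_zero,
    Nat.choose_succ_self, Nat.cast_zero, mul_zero, add_zero]
  refine sum_congr rfl fun b hb => ?_
  rw [show d + 1 + (m - (1 + b)) = d + (m - b) by rw [mem_range] at hb; omega]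

lemma coeffDivOneSubPow_one_sub_X_mul (Q : R[X]) (d m : ℕ) :
    coeffDivOneSubPow ((1 - X) * Q) (d + 1) m = coeffDivOneSubPow Q d m := by
  have h : coeffDivOneSubPow ((1 - X) * Q) (d + 1) m =
      coeffDivOneSubPow Q (d + 1) m - coeffDivOneSubPow (X * Q) (d + 1) m := by
    simp [coeffDivOneSubPow, sub_mul, sum_sub_distrib]
  rw [h, coeffDivOneSubPow_X_mul, coeffDivOneSubPow, coeffDivOneSubPow, ← sum_sub_distrib]
  refine sum_congr rfl fun j _ => ?_
  rw [← mul_sub, show d + 1 + (m - j) = d + (m - j) + 1 by omega, Nat.choose_succ_succ']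
  push_cast
  ring

lemma coeff_X_mul_derivative (Q : R[X]) (j : ℕ) :
    (X * derivative Q).coeff j = j * Q.coeff j := by
  rcases j with _ | j
  · simp
  · rw [coeff_X_mul, coeff_derivative]
    push_cast
    ring

/-- Coefficientwise form of
`X (Q / (1 - X) ^ (d + 1))' = X Q' / (1 - X) ^ (d + 1) + (d + 1) X Q / (1 - X) ^ (d + 2)`. -/
lemma coeffDivOneSubPow_X_mul_derivative (Q : R[X]) (d m : ℕ) :
    coeffDivOneSubPow (X * derivative Q) d m + (d + 1) * coeffDivOneSubPow (X * Q) (d + 1) m =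
      m * coeffDivOneSubPow Q d m := by
  rw [coeffDivOneSubPow_X_mul, coeffDivOneSubPow, coeffDivOneSubPow, mul_sum, mul_sum,
    ← sum_add_distrib]
  refine sum_congr rfl fun j hj => ?_
  have hjm : j ≤ m := Nat.lt_succ_iff.1 (mem_range.1 hj)
  have hchoose : ((d + (m - j)).choose (d + 1) * (d + 1) : R) =
      (d + (m - j)).choose d * (m - j : ℕ) := by
    have h := Nat.choose_succ_right_eq (d + (m - j)) d
    rw [Nat.add_sub_cancel_left] at h
    simpa using congrArg (Nat.cast : ℕ → R) h
  rw [coeff_X_mul_derivative, Nat.cast_sub hjm] at *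
  linear_combination Q.coeff j * hchoose

end CoeffDivOneSubPow

lemma zchoose_natCast (a b : ℕ) : zchoose a b = a.choose b := by
  unfold zchoose
  split_ifs with h
  · simp
  · rw [Nat.choose_eq_zero_of_lt (by omega), Nat.cast_zero]

lemma zchoose_of_lt {a b : ℤ} (h : a < b) : zchoose a b = 0 := if_neg (by omega)

/-- The numerator `4 ^ k X ^ k (1 + X) ^ d` of the generating function of `opL (2 * k + d) k`. -/
noncomputable def lpkPoly (k d : ℕ) : ℤ[X] := C (4 ^ k) * (X ^ k * (X + 1) ^ d)

lemma opL_eq_coeffDivOneSubPow {n k : ℕ} (m : ℕ) (h : 2 * k ≤ n) :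
    opL n k m = coeffDivOneSubPow (lpkPoly k (n - 2 * k)) n m := by
  have hd : (n : ℤ) - 2 * k = (n - 2 * k : ℕ) := by omega
  rw [opL, lpkPoly, coeffDivOneSubPow_C_mul, coeffDivOneSubPow_X_pow_mul, hd]
  simp_rw [zchoose_natCast, coeff_X_add_one_pow]
  congr 1
  rw [← sum_subset (range_subset_range.2 (min_le_left (n + 1) (m + 1 - k))),
    ← sum_subset (range_subset_range.2 (min_le_right (n + 1) (m + 1 - k)))]
  · refine sum_congr rfl fun b hb => ?_
    have hb : k + b ≤ m := by simp only [mem_range, lt_min_iff] at hb; omega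
    rw [mul_comm, show (n : ℤ) + m - (k + b) = (n + (m - (k + b)) : ℕ) by omega,
      zchoose_natCast]
  · intro b hb hb'
    simp only [mem_range, lt_min_iff, not_and_or, not_lt] at hb hb'
    rw [Nat.choose_eq_zero_of_lt (by omega), Nat.cast_zero, zero_mul]
  · intro b hb hb'
    simp only [mem_range, lt_min_iff, not_and_or, not_lt] at hb hb'
    rw [zchoose_of_lt (by omega), zero_mul]

-- Over `(1 - X) ^ (2 * k + d + 2)`, the right side is
-- `(2 X d/dX + 1) (lpkPoly k d / (1 - X) ^ (2 * k + d + 1))`.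
lemma lpkPoly_recurrence (k d : ℕ) :
    C (2 * k + 1 : ℤ) * lpkPoly k (d + 1) + C (d : ℤ) * lpkPoly (k + 1) (d - 1) =
      C 2 * ((1 - X) * (X * derivative (lpkPoly k d))) +
        C (2 * (2 * k + d) + 2 : ℤ) * (X * lpkPoly k d) + (1 - X) * lpkPoly k d := by
  simp only [lpkPoly, derivative_mul, derivative_C, derivative_pow,
    derivative_add, derivative_X, derivative_one]
  rcases k with _ | k <;> rcases d with _ | d <;> simp <;> ring

lemma opL_succ_recurrence {n k : ℕ} (m : ℕ) (h : 2 * k ≤ n) :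
    (2 * k + 1 : ℤ) * opL (n + 1) k m + ((n : ℤ) - 2 * k) * opL (n + 1) (k + 1) m =
      (2 * m + 1) * opL n k m := by
  obtain ⟨d, rfl⟩ : ∃ d, n = 2 * k + d := ⟨n - 2 * k, by omega⟩
  have hfirst :
      opL (2 * k + d + 1) k m = coeffDivOneSubPow (lpkPoly k (d + 1)) (2 * k + d + 1) m := by
    rw [opL_eq_coeffDivOneSubPow m (by omega), show 2 * k + d + 1 - 2 * k = d + 1 by omega]
  have hsecond : ((2 * k + d : ℕ) - 2 * k : ℤ) * opL (2 * k + d + 1) (k + 1) m =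
      d * coeffDivOneSubPow (lpkPoly (k + 1) (d - 1)) (2 * k + d + 1) m := by
    rcases d with _ | d
    · simp
    · rw [opL_eq_coeffDivOneSubPow m (by omega),
        show 2 * k + (d + 1) + 1 - 2 * (k + 1) = d + 1 - 1 by omega]
      push_cast
      ring
  have heuler := coeffDivOneSubPow_X_mul_derivative (lpkPoly k d) (2 * k + d) m
  rw [hfirst, hsecond, opL_eq_coeffDivOneSubPow m h, Nat.add_sub_cancel_left]
  calc _ = coeffDivOneSubPow (C (2 * k + 1 : ℤ) * lpkPoly k (d + 1) +
        C (d : ℤ) * lpkPoly (k + 1) (d - 1)) (2 * k + d + 1) m := by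
        rw [coeffDivOneSubPow_add, coeffDivOneSubPow_C_mul, coeffDivOneSubPow_C_mul]
    _ = _ := by
      rw [lpkPoly_recurrence]
      simp only [coeffDivOneSubPow_add, coeffDivOneSubPow_C_mul, coeffDivOneSubPow_one_sub_X_mul]
      push_cast at heuler ⊢
      linear_combination 2 * heuler

def leftPeaks (v : ℕ → ℕ) (N : ℕ) : Finset ℕ :=
  (Icc 1 (N - 1)).filter fun i => v (i - 1) < v i ∧ v (i + 1) < v i

def insertAt (v : ℕ → ℕ) (s x : ℕ) (j : ℕ) : ℕ :=
  if j < s then v j else if j = s then x else v (j - 1)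

section LeftPeaks

variable {v : ℕ → ℕ} {N s x : ℕ}

lemma leftPeaks_subset_Icc : leftPeaks v N ⊆ Icc 1 (N - 1) := filter_subset _ _

lemma add_one_notMem_leftPeaks {q : ℕ} (hq : q ∈ leftPeaks v N) : q + 1 ∉ leftPeaks v N := by
  simp only [leftPeaks, mem_filter] at hq ⊢
  grind

/-- Inserting a new maximum into `v` at slot `s ∈ [1, N + 1]` makes `s` a left peak unless `s` is
the last slot, and destroys the left peak `s - 1` or `s` of `v` if there is one. So the number of
left peaks grows by one exactly when `s ∉ blockedSlots v N`. -/
def blockedSlots (v : ℕ → ℕ) (N : ℕ) : Finset ℕ :=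
  insert (N + 1) (leftPeaks v N ∪ (leftPeaks v N).image (· + 1))

lemma mem_blockedSlots (hs : 1 ≤ s) :
    s ∈ blockedSlots v N ↔ s = N + 1 ∨ s ∈ leftPeaks v N ∨ s - 1 ∈ leftPeaks v N := by
  simp only [blockedSlots, mem_insert, mem_union, mem_image]
  grind

lemma card_blockedSlots : #(blockedSlots v N) = 2 * #(leftPeaks v N) + 1 := by
  have hdisj : Disjoint (leftPeaks v N) ((leftPeaks v N).image (· + 1)) := by
    simp only [disjoint_left, mem_image, not_exists, not_and]
    rintro _ hq q hq' rfl
    exact add_one_notMem_leftPeaks hq' hq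
  have hlast : N + 1 ∉ leftPeaks v N ∪ (leftPeaks v N).image (· + 1) := by
    simp only [mem_union, mem_image, not_or, not_exists, not_and]
    constructor
    · intro h; have := mem_Icc.1 (leftPeaks_subset_Icc h); omega
    · intro q hq h; have := mem_Icc.1 (leftPeaks_subset_Icc hq); omega
  rw [blockedSlots, card_insert_of_notMem hlast, card_union_of_disjoint hdisj,
    card_image_of_injective _ (add_left_injective 1)]
  ring

lemma blockedSlots_subset_Icc : blockedSlots v N ⊆ Icc 1 (N + 1) := by
  intro s hs
  simp only [blockedSlots, mem_insert, mem_union, mem_image] at hs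
  rcases hs with rfl | hq | ⟨q, hq, rfl⟩
  · simp
  all_goals have := mem_Icc.1 (leftPeaks_subset_Icc hq); simp only [mem_Icc]; omega

lemma two_mul_card_leftPeaks_le : 2 * #(leftPeaks v N) ≤ N := by
  have := card_le_card (blockedSlots_subset_Icc (v := v) (N := N))
  rw [card_blockedSlots, Nat.card_Icc] at this
  omega

lemma mem_leftPeaks_insertAt (hv : ∀ j, v j < x) (hs : s ∈ Icc 1 (N + 1)) {i : ℕ} :
    i ∈ leftPeaks (insertAt v s x) (N + 1) ↔
      i = s ∧ s ≤ N ∨ i + 1 < s ∧ i ∈ leftPeaks v N ∨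
        s + 1 < i ∧ i - 1 ∈ leftPeaks v N := by
  simp only [mem_Icc] at hs
  simp only [leftPeaks, insertAt, mem_filter, mem_Icc]
  have := hv (i - 2); have := hv (i - 1); have := hv i
  grind

lemma card_erase_leftPeaks_insertAt (hv : ∀ j, v j < x) (hs : s ∈ Icc 1 (N + 1)) :
    #((leftPeaks (insertAt v s x) (N + 1)).erase s) =
      #(((leftPeaks v N).erase (s - 1)).erase s) := by
  refine card_nbij' (fun i => if i < s then i else i - 1) (fun q => if q < s then q else q + 1)
    ?_ ?_ ?_ ?_ <;> intro i hi <;>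
    simp only [coe_erase, Set.mem_sdiff, mem_coe, Set.mem_singleton_iff,
      mem_leftPeaks_insertAt hv hs] at hi ⊢ <;>
    grind

lemma card_leftPeaks_insertAt (hv : ∀ j, v j < x) (hs : s ∈ Icc 1 (N + 1)) :
    #(leftPeaks (insertAt v s x) (N + 1)) =
      #(leftPeaks v N) + if s ∈ blockedSlots v N then 0 else 1 := by
  have hs1 : 1 ≤ s := (mem_Icc.1 hs).1
  have h := card_erase_leftPeaks_insertAt hv hs
  have hsW : s ∈ leftPeaks (insertAt v s x) (N + 1) ↔ s ≤ N := by
    rw [mem_leftPeaks_insertAt hv hs]; omega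
  have hadj : s - 1 ∈ leftPeaks v N → s ∉ leftPeaks v N := fun h' => by
    simpa [Nat.sub_add_cancel hs1] using add_one_notMem_leftPeaks h'
  have hle : ∀ q ∈ leftPeaks v N, 1 ≤ q ∧ q ≤ N - 1 := fun q hq =>
    mem_Icc.1 (leftPeaks_subset_Icc hq)
  simp only [card_erase_eq_ite, mem_erase, hsW] at h
  simp only [mem_blockedSlots hs1]
  grind [card_pos]

lemma sum_comp_card_leftPeaks_insertAt {M : Type*} [AddCommMonoid M] (hv : ∀ j, v j < x)
    (f : ℕ → M) :
    ∑ s ∈ Icc 1 (N + 1), f #(leftPeaks (insertAt v s x) (N + 1)) =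
      (2 * #(leftPeaks v N) + 1) • f #(leftPeaks v N) +
        (N - 2 * #(leftPeaks v N)) • f (#(leftPeaks v N) + 1) := by
  have hB := blockedSlots_subset_Icc (v := v) (N := N)
  have hterm : ∀ s ∈ Icc 1 (N + 1), f #(leftPeaks (insertAt v s x) (N + 1)) =
      if s ∈ blockedSlots v N then f #(leftPeaks v N) else f (#(leftPeaks v N) + 1) :=
    fun s hs => by
    rw [card_leftPeaks_insertAt hv hs]; split_ifs <;> rfl
  rw [sum_congr rfl hterm, sum_ite, sum_const, sum_const, filter_mem_eq_inter,
    inter_eq_right.2 hB, filter_notMem_eq_sdiff, card_sdiff_of_subset hB, card_blockedSlots,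
    Nat.card_Icc]
  congr 2
  omega

end LeftPeaks

namespace Equiv.Perm

variable {n : ℕ}

def insertMax (π : Perm (Fin n)) (p : Fin (n + 1)) : Perm (Fin (n + 1)) :=
  (finSuccEquiv' p).trans ((optionCongr π).trans (finSuccEquiv' (Fin.last n)).symm)

@[simp]
lemma insertMax_apply_self (π : Perm (Fin n)) (p : Fin (n + 1)) :
    insertMax π p p = Fin.last n := by
  simp [insertMax]

@[simp]
lemma insertMax_apply_succAbove (π : Perm (Fin n)) (p : Fin (n + 1)) (i : Fin n) :
    insertMax π p (p.succAbove i) = (π i).castSucc := by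
  simp [insertMax]

lemma insertMax_symm_last (π : Perm (Fin n)) (p : Fin (n + 1)) :
    (insertMax π p).symm (Fin.last n) = p :=
  (Equiv.symm_apply_eq _).2 (insertMax_apply_self π p).symm

lemma bijective_insertMax :
    Function.Bijective fun x : Perm (Fin n) × Fin (n + 1) => insertMax x.1 x.2 := by
  refine (Fintype.bijective_iff_injective_and_card _).2
    ⟨?_, by simp [Fintype.card_perm, Nat.factorial_succ, mul_comm]⟩
  rintro ⟨π, p⟩ ⟨π', p'⟩ h
  simp only at h
  obtain rfl : p = p' := by rw [← insertMax_symm_last π p, h, insertMax_symm_last]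
  refine Prod.ext (Equiv.ext fun i => Fin.castSucc_injective _ ?_) rfl
  rw [← insertMax_apply_succAbove π p, h, insertMax_apply_succAbove]

end Equiv.Perm

open Equiv.Perm

lemma pval_add_one {n : ℕ} (π : Equiv.Perm (Fin n)) (i : Fin n) :
    pval π (i + 1) = π i + 1 := by
  simp [pval]

lemma pval_eq_zero {n : ℕ} (π : Equiv.Perm (Fin n)) {j : ℕ} (hj : j = 0 ∨ n < j) :
    pval π j = 0 := by
  rw [pval, dif_neg (by omega)]

lemma pval_lt {n : ℕ} (π : Equiv.Perm (Fin n)) (j : ℕ) : pval π j < n + 1 := by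
  unfold pval; split_ifs <;> omega

lemma pval_insertMax {n : ℕ} (π : Equiv.Perm (Fin n)) (p : Fin (n + 1)) :
    pval (insertMax π p) = insertAt (pval π) (p + 1) (n + 1) := by
  funext j
  rcases Nat.eq_zero_or_pos j with rfl | hj
  · simp [insertAt, pval_eq_zero]
  obtain hj' | ⟨i, rfl⟩ : n + 1 < j ∨ ∃ i : Fin (n + 1), j = i + 1 :=
    (lt_or_ge (n + 1) j).imp_right fun h => ⟨⟨j - 1, by omega⟩, by dsimp only; omega⟩
  · rw [pval_eq_zero _ (.inr hj'), insertAt, if_neg (by omega), if_neg (by omega),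
      pval_eq_zero _ (.inr (by omega))]
  rw [pval_add_one]
  rcases Fin.eq_self_or_eq_succAbove p i with rfl | ⟨t, rfl⟩
  · simp [insertAt]
  rw [insertMax_apply_succAbove, Fin.val_castSucc]
  rcases lt_or_ge t.castSucc p with h | h
  · rw [Fin.succAbove_of_castSucc_lt _ _ h, Fin.val_castSucc, insertAt,
      if_pos (by simpa [Fin.lt_def] using h), pval_add_one]
  · rw [Fin.le_def, Fin.val_castSucc] at h
    rw [Fin.succAbove_of_le_castSucc _ _ (Fin.le_def.2 h), Fin.val_succ, insertAt,
      if_neg (by omega), if_neg (by omega), Nat.add_sub_cancel, pval_add_one]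

lemma lpk_eq_card_leftPeaks {n : ℕ} (π : Equiv.Perm (Fin n)) :
    lpk π = #(leftPeaks (pval π) n) := rfl

lemma two_mul_lpk_le {n : ℕ} (π : Equiv.Perm (Fin n)) : 2 * lpk π ≤ n :=
  two_mul_card_leftPeaks_le

lemma sum_comp_lpk_insertMax {M : Type*} [AddCommMonoid M] {n : ℕ} (π : Equiv.Perm (Fin n))
    (f : ℕ → M) :
    ∑ p, f (lpk (insertMax π p)) =
      (2 * lpk π + 1) • f (lpk π) + (n - 2 * lpk π) • f (lpk π + 1) := by
  simp_rw [lpk_eq_card_leftPeaks, pval_insertMax]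
  set g : ℕ → M := fun s => f #(leftPeaks (insertAt (pval π) s (n + 1)) (n + 1))
  rw [Fin.sum_univ_eq_sum_range (fun p => g (p + 1)), range_eq_Ico, sum_Ico_add' g, zero_add,
    Ico_add_one_right_eq_Icc]
  exact sum_comp_card_leftPeaks_insertAt (pval_lt π) f

theorem stmt13_general (n m : ℕ) :
    ∑ π : Equiv.Perm (Fin n), opL n (lpk π) m = (2 * (m : ℤ) + 1) ^ n := by
  induction n with
  | zero => simp [lpk, opL, zchoose]
  | succ n ih =>
    rw [← Fintype.sum_bijective _ bijective_insertMax
        (fun x => opL (n + 1) (lpk (insertMax x.1 x.2)) m) _ fun _ => rfl,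
      Fintype.sum_prod_type' fun π p => opL (n + 1) (lpk (insertMax π p)) m]
    calc _ = ∑ π : Equiv.Perm (Fin n), (2 * m + 1) * opL n (lpk π) m := by
          refine sum_congr rfl fun π _ => ?_
          rw [sum_comp_lpk_insertMax π (opL (n + 1) · m), nsmul_eq_mul, nsmul_eq_mul,
            Nat.cast_sub (two_mul_lpk_le π), ← opL_succ_recurrence m (two_mul_lpk_le π)]
          push_cast
          ring
      _ = _ := by rw [← mul_sum, ih, pow_succ, mul_comm]

theorem stmt13 (n m : ℕ) (hn : 1 ≤ n) :
    ∑ π : Equiv.Perm (Fin n), opL n (lpk π) m = (2 * (m : ℤ) + 1) ^ n :=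
  stmt13_general n m
end
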